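/- arXiv:1809.04769 — 6 statements merged into one kernel-verified Lean document; each statement's English description precedes it below -/
import Mathlib

section
/- For the direct product G = K_{n1} × K_{n2} of two complete graphs with 3 ≤ n1 ≤ n2, every set of three pairwise nonadjacent vertices must agree in some coordinate; consequently every maximal independent set of G is a fiber of a coordinate projection, and the lower independence number satisfies i(G) = n1. -/
open SimpleGraph

def unitaryCayley (n : ℕ) : SimpleGraph (ZMod n) where
  Adj a b := a ≠ b ∧ IsUnit (a - b)
  symm := by
    constructor
    rintro a b ⟨h1, h2⟩
    refine ⟨h1.symm, ?_⟩
    rw [← neg_sub]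
    exact h2.neg
  loopless := by constructor; rintro a ⟨h, _⟩; exact h rfl

def tensorProd {α β : Type*} (G : SimpleGraph α) (H : SimpleGraph β) :
    SimpleGraph (α × β) where
  Adj x y := G.Adj x.1 y.1 ∧ H.Adj x.2 y.2
  symm := by constructor; rintro x y ⟨h1, h2⟩; exact ⟨h1.symm, h2.symm⟩
  loopless := by constructor; rintro x ⟨h, _⟩; exact G.loopless.irrefl _ h

def tensorPi {ι : Type*} {α : ι → Type*} (G : ∀ i, SimpleGraph (α i)) :
    SimpleGraph (∀ i, α i) where
  Adj x y := x ≠ y ∧ ∀ i, (G i).Adj (x i) (y i)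
  symm := by constructor; rintro x y ⟨h1, h2⟩; exact ⟨h1.symm, fun i => (h2 i).symm⟩
  loopless := by constructor; rintro x ⟨h, _⟩; exact h rfl

/-- The balanced complete multipartite graph `K[a,b]`: `b` parts of size `a`. -/
def multipartite (a b : ℕ) : SimpleGraph (Fin a × Fin b) where
  Adj x y := x.2 ≠ y.2
  symm := by constructor; rintro x y h; exact h.symm
  loopless := by constructor; rintro x h; exact h rfl

def prodComplete2 (n1 n2 : ℕ) : SimpleGraph (Fin n1 × Fin n2) :=
  tensorProd (completeGraph (Fin n1)) (completeGraph (Fin n2))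

def prodComplete3 (n1 n2 n3 : ℕ) : SimpleGraph (Fin n1 × Fin n2 × Fin n3) :=
  tensorProd (completeGraph (Fin n1)) (prodComplete2 n2 n3)

def prodCompletePi (t : ℕ) (n : Fin t → ℕ) : SimpleGraph (∀ i, Fin (n i)) :=
  tensorPi fun i => completeGraph (Fin (n i))

def prodMultipartite (t : ℕ) (a b : Fin t → ℕ) :
    SimpleGraph (∀ i, Fin (a i) × Fin (b i)) :=
  tensorPi fun i => multipartite (a i) (b i)

def IsDominating {V : Type*} (G : SimpleGraph V) (S : Set V) : Prop :=
  ∀ v, v ∈ S ∨ ∃ u ∈ S, G.Adj u v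

def IsTotalDominating {V : Type*} (G : SimpleGraph V) (S : Set V) : Prop :=
  ∀ v, ∃ u ∈ S, G.Adj u v

def IsIndep {V : Type*} (G : SimpleGraph V) (S : Set V) : Prop :=
  ∀ u ∈ S, ∀ v ∈ S, ¬ G.Adj u v

def closedNbhd {V : Type*} (G : SimpleGraph V) (v : V) : Set V :=
  {u | u = v ∨ G.Adj v u}

def IsIrredundant {V : Type*} (G : SimpleGraph V) (S : Set V) : Prop :=
  ∀ v ∈ S, ∃ u ∈ closedNbhd G v, ∀ w ∈ S, w ≠ v → u ∉ closedNbhd G w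

noncomputable def domNum {V : Type*} (G : SimpleGraph V) : ℕ :=
  sInf {k | ∃ S : Set V, IsDominating G S ∧ S.ncard = k}

noncomputable def totalDomNum {V : Type*} (G : SimpleGraph V) : ℕ :=
  sInf {k | ∃ S : Set V, IsTotalDominating G S ∧ S.ncard = k}

noncomputable def irNum {V : Type*} (G : SimpleGraph V) : ℕ :=
  sInf {k | ∃ S : Set V, Maximal (IsIrredundant G) S ∧ S.ncard = k}

noncomputable def iNum {V : Type*} (G : SimpleGraph V) : ℕ :=
  sInf {k | ∃ S : Set V, Maximal (IsIndep G) S ∧ S.ncard = k}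

noncomputable def alphaNum {V : Type*} (G : SimpleGraph V) : ℕ :=
  sSup {k | ∃ S : Set V, IsIndep G S ∧ S.ncard = k}

noncomputable def upperDomNum {V : Type*} (G : SimpleGraph V) : ℕ :=
  sSup {k | ∃ S : Set V, Minimal (IsDominating G) S ∧ S.ncard = k}

noncomputable def IRNum {V : Type*} (G : SimpleGraph V) : ℕ :=
  sSup {k | ∃ S : Set V, IsIrredundant G S ∧ S.ncard = k}

/-- The Jacobsthal function: least `m > 0` such that any `m` consecutive integers
contain one coprime to `n`. -/
noncomputable def jacobsthal (n : ℕ) : ℕ :=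
  sInf {m | 0 < m ∧ ∀ x : ℤ, ∃ i : ℕ, i < m ∧ Int.gcd (x + i) n = 1}

section Aux
variable {n1 n2 : ℕ}


/-!
Two vertices of `K_α × K_β` are nonadjacent exactly when they share a coordinate, so in three
pairwise nonadjacent vertices two of the agreements have the same coordinate and one common
coordinate is forced. Hence an independent set containing two vertices in different rows lies in
a single column, and a maximal one is a whole row or column; these have sizes `|β|` and `|α|`.
-/

namespace CompleteTensor

variable {α β : Type*}

lemma adj_iff {u v : α × β} :
    (tensorProd (completeGraph α) (completeGraph β)).Adj u v ↔ u.1 ≠ v.1 ∧ u.2 ≠ v.2 := by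
  simp [tensorProd]

lemma fst_eq_or_snd_eq_of_not_adj {u v : α × β}
    (h : ¬ (tensorProd (completeGraph α) (completeGraph β)).Adj u v) :
    u.1 = v.1 ∨ u.2 = v.2 := by
  rw [adj_iff] at h
  tauto

lemma fst_eq_or_snd_eq_of_pairwise_not_adj {u v w : α × β}
    (huv : ¬ (tensorProd (completeGraph α) (completeGraph β)).Adj u v)
    (huw : ¬ (tensorProd (completeGraph α) (completeGraph β)).Adj u w)
    (hvw : ¬ (tensorProd (completeGraph α) (completeGraph β)).Adj v w) :
    (u.1 = v.1 ∧ u.1 = w.1) ∨ (u.2 = v.2 ∧ u.2 = w.2) := by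
  have := fst_eq_or_snd_eq_of_not_adj huv
  have := fst_eq_or_snd_eq_of_not_adj huw
  have := fst_eq_or_snd_eq_of_not_adj hvw
  grind

lemma isIndep_setOf_fst_eq (x : α) :
    IsIndep (tensorProd (completeGraph α) (completeGraph β)) {v | v.1 = x} :=
  fun _ hu _ hv hadj => (adj_iff.mp hadj).1 (hu.trans hv.symm)

lemma isIndep_setOf_snd_eq (y : β) :
    IsIndep (tensorProd (completeGraph α) (completeGraph β)) {v | v.2 = y} :=
  fun _ hu _ hv hadj => (adj_iff.mp hadj).2 (hu.trans hv.symm)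

lemma maximal_isIndep_setOf_snd_eq [Nontrivial α] (y : β) :
    Maximal (IsIndep (tensorProd (completeGraph α) (completeGraph β))) {v | v.2 = y} := by
  refine ⟨isIndep_setOf_snd_eq y, fun T hT hsub t ht => ?_⟩
  by_contra hty
  obtain ⟨x, hx⟩ := exists_ne t.1
  exact hT (x, y) (hsub rfl) t ht (adj_iff.mpr ⟨hx, fun h => hty h.symm⟩)

lemma maximal_isIndep_eq_fiber [Nonempty α] [Nonempty β] {S : Set (α × β)}
    (hS : Maximal (IsIndep (tensorProd (completeGraph α) (completeGraph β))) S) :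
    (∃ x, S = {v | v.1 = x}) ∨ (∃ y, S = {v | v.2 = y}) := by
  obtain ⟨u, hu⟩ : S.Nonempty := by
    obtain ⟨v⟩ : Nonempty (α × β) := inferInstance
    have hv : IsIndep (tensorProd (completeGraph α) (completeGraph β)) {v} := by
      rintro a rfl b rfl
      exact SimpleGraph.irrefl _
    by_contra hempty
    exact hempty ⟨v, hS.2 hv (fun w hw => (hempty ⟨w, hw⟩).elim) rfl⟩
  by_cases hfst : ∀ v ∈ S, v.1 = u.1
  · exact .inl ⟨u.1, hS.eq_of_subset (isIndep_setOf_fst_eq u.1) hfst⟩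
  · obtain ⟨v, hv, hvu⟩ := not_forall₂.mp hfst
    -- a second vertex off `u`'s row pins every vertex of `S` to `u`'s column
    have hsnd : ∀ w ∈ S, w.2 = u.2 := fun w hw =>
      match fst_eq_or_snd_eq_of_pairwise_not_adj (hS.1 u hu v hv) (hS.1 u hu w hw)
          (hS.1 v hv w hw) with
      | .inl ⟨huv, _⟩ => absurd huv.symm hvu
      | .inr ⟨_, huw⟩ => huw.symm
    exact .inr ⟨u.2, hS.eq_of_subset (isIndep_setOf_snd_eq u.2) hsnd⟩

lemma ncard_setOf_fst_eq (x : α) : {v : α × β | v.1 = x}.ncard = Nat.card β := by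
  have : {v : α × β | v.1 = x} = {x} ×ˢ Set.univ := by ext; simp
  rw [this, Set.ncard_prod, Set.ncard_singleton, Set.ncard_univ, one_mul]

lemma ncard_setOf_snd_eq (y : β) : {v : α × β | v.2 = y}.ncard = Nat.card α := by
  have : {v : α × β | v.2 = y} = Set.univ ×ˢ {y} := by ext; simp
  rw [this, Set.ncard_prod, Set.ncard_singleton, Set.ncard_univ, mul_one]

lemma iNum_eq [Nontrivial α] [Nonempty β] (hcard : Nat.card α ≤ Nat.card β) :
    iNum (tensorProd (completeGraph α) (completeGraph β)) = Nat.card α := by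
  obtain ⟨y⟩ := ‹Nonempty β›
  refine IsLeast.csInf_eq ⟨⟨_, maximal_isIndep_setOf_snd_eq y, ncard_setOf_snd_eq y⟩, ?_⟩
  rintro k ⟨S, hS, rfl⟩
  rcases maximal_isIndep_eq_fiber hS with ⟨x, rfl⟩ | ⟨y, rfl⟩
  · rwa [ncard_setOf_fst_eq]
  · rw [ncard_setOf_snd_eq]

end CompleteTensor

open CompleteTensor in
theorem stmt5 (n1 n2 : ℕ) (h1 : 3 ≤ n1) (h12 : n1 ≤ n2) :
    (∀ u v w : Fin n1 × Fin n2,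
      ¬ (prodComplete2 n1 n2).Adj u v → ¬ (prodComplete2 n1 n2).Adj u w →
      ¬ (prodComplete2 n1 n2).Adj v w →
      (u.1 = v.1 ∧ u.1 = w.1) ∨ (u.2 = v.2 ∧ u.2 = w.2)) ∧
    (∀ S : Set (Fin n1 × Fin n2), Maximal (IsIndep (prodComplete2 n1 n2)) S →
      (∃ x : Fin n1, S = {v | v.1 = x}) ∨ (∃ y : Fin n2, S = {v | v.2 = y})) ∧
    iNum (prodComplete2 n1 n2) = n1 := by
  have : Nontrivial (Fin n1) := Fin.nontrivial_iff_two_le.mpr (by omega)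
  have : NeZero n2 := ⟨by omega⟩
  refine ⟨fun _ _ _ => fst_eq_or_snd_eq_of_pairwise_not_adj,
    fun _ => maximal_isIndep_eq_fiber, ?_⟩
  simpa [prodComplete2] using iNum_eq (α := Fin n1) (β := Fin n2) (by simpa using h12)
end Aux
end

section
/- For the direct product G = K_{n1} × K_{n2} × K_{n3} of three complete graphs with all n_i ≥ 2, the lower independence number satisfies i(G) = 4; in particular the set {(0,0,0),(1,0,1),(1,1,0),(0,1,1)} is a maximal independent set. -/
/-! A maximal independent set is dominating, so it suffices that no three vertices `u, v, w`
dominate `K_{n₁} × K_{n₂} × K_{n₃}`. Look for an undominated vertex `(u.1, y)` in the fibre of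
`u.1`: it is automatically non-adjacent to the vertices in that fibre, which it only has to avoid,
while the remaining ones must agree with `y` in a coordinate of `K_{n₂} × K_{n₃}`. Since
`n₂, n₃ ≥ 2`, the square has room for such a `y` in each of the possible configurations.
The even vertices of a `2 × 2 × 2` subcube form a maximal independent set of size four. -/

open SimpleGraph

section Domination

variable {V : Type*} {G : SimpleGraph V} {S T : Set V}

lemma IsDominating.mono (hS : IsDominating G S) (hST : S ⊆ T) : IsDominating G T := fun v =>
  (hS v).imp (fun h => hST h) fun ⟨u, hu, huv⟩ => ⟨u, hST hu, huv⟩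

lemma isDominating_of_maximal_isIndep (hS : Maximal (IsIndep G) S) : IsDominating G S := by
  intro v
  by_contra! hv
  obtain ⟨hvS, hnadj⟩ := hv
  have hindep : IsIndep G (insert v S) := by
    rintro a (rfl | ha) b (rfl | hb)
    · exact G.loopless.irrefl _
    · exact fun h => hnadj b hb h.symm
    · exact hnadj a ha
    · exact hS.1 a ha b hb
  exact hvS (hS.2 hindep (Set.subset_insert v S) (Set.mem_insert v S))

lemma iNum_eq_of_forall_le {k : ℕ} (hS : Maximal (IsIndep G) S) (hcard : S.ncard = k)
    (hle : ∀ T, Maximal (IsIndep G) T → k ≤ T.ncard) : iNum G = k :=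
  le_antisymm (Nat.sInf_le ⟨S, hS, hcard⟩)
    (le_csInf ⟨k, S, hS, hcard⟩ fun _ ⟨T, hT, hk⟩ => hk ▸ hle T hT)

end Domination

lemma Set.exists_subset_triple_of_encard_le_three {V : Type*} [Nonempty V] {S : Set V}
    (h : S.encard ≤ 3) : ∃ u v w, S ⊆ {u, v, w} := by
  obtain ⟨n, hn⟩ := ENat.ne_top_iff_exists.mp (ne_top_of_le_ne_top (by decide) h)
  rw [← hn] at h
  norm_cast at h
  interval_cases n
  · obtain rfl := Set.encard_eq_zero.mp hn.symm
    obtain ⟨x⟩ := ‹Nonempty V›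
    exact ⟨x, x, x, Set.empty_subset _⟩
  · obtain ⟨a, rfl⟩ := Set.encard_eq_one.mp hn.symm
    exact ⟨a, a, a, by simp⟩
  · obtain ⟨a, b, -, rfl⟩ := Set.encard_eq_two.mp hn.symm
    exact ⟨a, b, b, by simp⟩
  · obtain ⟨a, b, c, -, -, -, rfl⟩ := Set.encard_eq_three.mp hn.symm
    exact ⟨a, b, c, subset_rfl⟩

lemma not_isDominating_tensorProd_top {α W : Type*} (H : SimpleGraph W) {S : Set (α × W)}
    (a : α) (y : W) (hne : ∀ z ∈ S, z.1 = a → z.2 ≠ y)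
    (hnadj : ∀ z ∈ S, z.1 ≠ a → ¬ H.Adj z.2 y) :
    ¬ IsDominating (tensorProd ⊤ H) S := by
  intro h
  rcases h (a, y) with hmem | ⟨z, hz, hza, hzy⟩
  · exact hne _ hmem rfl rfl
  · exact hnadj z hz hza hzy

section CompleteSquare

variable {β γ : Type*}

lemma exists_ne_ne_ne [Nontrivial β] [Nontrivial γ] (a b c : β × γ) :
    ∃ y, y ≠ a ∧ y ≠ b ∧ y ≠ c := by
  classical
  obtain ⟨b₀, b₁, hb⟩ := exists_pair_ne β
  obtain ⟨c₀, c₁, hc⟩ := exists_pair_ne γ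
  have hcard : ({a, b, c} : Finset (β × γ)).card <
      ({(b₀, c₀), (b₀, c₁), (b₁, c₀), (b₁, c₁)} : Finset (β × γ)).card := by
    refine Finset.card_le_three.trans_lt ?_
    rw [Finset.card_insert_of_notMem, Finset.card_insert_of_notMem, Finset.card_pair] <;>
      simp [hb, hc]
  obtain ⟨y, -, hy⟩ := Finset.exists_mem_notMem_of_card_lt_card hcard
  simp only [Finset.mem_insert, Finset.mem_singleton, not_or] at hy
  exact ⟨y, hy⟩

lemma exists_ne_ne_not_adj [Nontrivial β] [Nontrivial γ] (a b p : β × γ) :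
    ∃ y, y ≠ a ∧ y ≠ b ∧ ¬ (tensorProd (⊤ : SimpleGraph β) (⊤ : SimpleGraph γ)).Adj p y := by
  classical
  obtain ⟨c, hc⟩ := exists_ne p.2
  obtain ⟨d, hd⟩ := exists_ne p.1
  have hcard :
      ({a, b} : Finset (β × γ)).card < ({p, (p.1, c), (d, p.2)} : Finset (β × γ)).card := by
    refine Finset.card_le_two.trans_lt ?_
    rw [Finset.card_insert_of_notMem, Finset.card_pair] <;>
      simp [Prod.ext_iff, hc, hc.symm, hd.symm]
  obtain ⟨y, hyp, hy⟩ := Finset.exists_mem_notMem_of_card_lt_card hcard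
  simp only [Finset.mem_insert, Finset.mem_singleton, not_or] at hy hyp
  refine ⟨y, hy.1, hy.2, ?_⟩
  rcases hyp with rfl | rfl | rfl <;> simp [tensorProd]

lemma exists_ne_not_adj_not_adj [Nontrivial γ] (a p q : β × γ) :
    ∃ y, y ≠ a ∧ ¬ (tensorProd (⊤ : SimpleGraph β) (⊤ : SimpleGraph γ)).Adj p y ∧
      ¬ (tensorProd (⊤ : SimpleGraph β) (⊤ : SimpleGraph γ)).Adj q y := by
  by_cases h₁ : (p.1, q.2) = a
  · by_cases h₂ : (q.1, p.2) = a
    · obtain ⟨c, hc⟩ := exists_ne a.2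
      have hp : p.1 = a.1 := congr(Prod.fst $h₁)
      have hq : q.1 = a.1 := congr(Prod.fst $h₂)
      exact ⟨(a.1, c), fun h => hc congr(Prod.snd $h), by simp [tensorProd, hp],
        by simp [tensorProd, hq]⟩
    · exact ⟨_, h₂, by simp [tensorProd]⟩
  · exact ⟨_, h₁, by simp [tensorProd]⟩

end CompleteSquare

section CompleteCube

variable {α β γ : Type*}

theorem not_isDominating_triple [Nontrivial β] [Nontrivial γ] (u v w : α × β × γ) :
    ¬ IsDominating (tensorProd (⊤ : SimpleGraph α)
      (tensorProd (⊤ : SimpleGraph β) (⊤ : SimpleGraph γ))) {u, v, w} := by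
  rcases eq_or_ne v.1 u.1 with hv | hv <;> rcases eq_or_ne w.1 u.1 with hw | hw
  · obtain ⟨y, hyu, hyv, hyw⟩ := exists_ne_ne_ne u.2 v.2 w.2
    refine not_isDominating_tensorProd_top _ u.1 y ?_ ?_ <;> simp_all [Ne.symm]
  · obtain ⟨y, hyu, hyv, hyw⟩ := exists_ne_ne_not_adj u.2 v.2 w.2
    refine not_isDominating_tensorProd_top _ u.1 y ?_ ?_ <;> simp_all [Ne.symm]
  · obtain ⟨y, hyu, hyw, hyv⟩ := exists_ne_ne_not_adj u.2 w.2 v.2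
    refine not_isDominating_tensorProd_top _ u.1 y ?_ ?_ <;> simp_all [Ne.symm]
  · obtain ⟨y, hyu, hyv, hyw⟩ := exists_ne_not_adj_not_adj u.2 v.2 w.2
    refine not_isDominating_tensorProd_top _ u.1 y ?_ ?_ <;> simp_all [Ne.symm]

theorem four_le_encard_of_isDominating [Nonempty α] [Nontrivial β] [Nontrivial γ]
    {S : Set (α × β × γ)}
    (hS : IsDominating (tensorProd (⊤ : SimpleGraph α)
      (tensorProd (⊤ : SimpleGraph β) (⊤ : SimpleGraph γ))) S) : 4 ≤ S.encard := by
  by_contra! h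
  obtain ⟨u, v, w, hsub⟩ := Set.exists_subset_triple_of_encard_le_three (Order.le_of_lt_add_one h)
  exact not_isDominating_triple u v w (hS.mono hsub)

def evenSubcube (a₀ a₁ : α) (b₀ b₁ : β) (c₀ c₁ : γ) : Set (α × β × γ) :=
  {(a₀, b₀, c₀), (a₁, b₀, c₁), (a₁, b₁, c₀), (a₀, b₁, c₁)}

variable {a₀ a₁ : α} {b₀ b₁ : β} {c₀ c₁ : γ}

theorem maximal_isIndep_evenSubcube (ha : a₀ ≠ a₁) (hb : b₀ ≠ b₁) (hc : c₀ ≠ c₁) :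
    Maximal (IsIndep (tensorProd (⊤ : SimpleGraph α)
      (tensorProd (⊤ : SimpleGraph β) (⊤ : SimpleGraph γ)))) (evenSubcube a₀ a₁ b₀ b₁ c₀ c₁) := by
  refine ⟨?_, fun T hT hsub x hx => ?_⟩
  · simp [IsIndep, evenSubcube, tensorProd]
  · -- `x` agrees with every even vertex in some coordinate; this forces each coordinate of `x`
    -- into the subcube, and the odd vertices are adjacent to their antipodes
    have key : ∀ s ∈ evenSubcube a₀ a₁ b₀ b₁ c₀ c₁, ¬ _ := fun s hs => hT s (hsub hs) x hx
    obtain ⟨a, b, c⟩ := x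
    simp only [evenSubcube, tensorProd, Set.mem_insert_iff, Set.mem_singleton_iff,
      forall_eq_or_imp, forall_eq, top_adj, ne_eq, not_and, not_not, Prod.mk.injEq] at key ⊢
    by_cases b = b₀ <;> by_cases b = b₁ <;> by_cases c = c₀ <;> by_cases c = c₁ <;> grind

theorem ncard_evenSubcube (ha : a₀ ≠ a₁) (hb : b₀ ≠ b₁) (hc : c₀ ≠ c₁) :
    (evenSubcube a₀ a₁ b₀ b₁ c₀ c₁).ncard = 4 := by
  rw [evenSubcube, Set.ncard_insert_of_notMem, Set.ncard_insert_of_notMem, Set.ncard_pair] <;>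
    simp [ha, hb, hc, ha.symm, hc.symm]

end CompleteCube

theorem stmt6 (n1 n2 n3 : ℕ) (h1 : 2 ≤ n1) (h2 : 2 ≤ n2) (h3 : 2 ≤ n3) :
    iNum (prodComplete3 n1 n2 n3) = 4 ∧
    Maximal (IsIndep (prodComplete3 n1 n2 n3))
      ({(⟨0, by omega⟩, ⟨0, by omega⟩, ⟨0, by omega⟩),
        (⟨1, by omega⟩, ⟨0, by omega⟩, ⟨1, by omega⟩),
        (⟨1, by omega⟩, ⟨1, by omega⟩, ⟨0, by omega⟩),
        (⟨0, by omega⟩, ⟨1, by omega⟩, ⟨1, by omega⟩)} :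
        Set (Fin n1 × Fin n2 × Fin n3)) := by
  have : Nonempty (Fin n1) := ⟨⟨0, by omega⟩⟩
  have := Fin.nontrivial_iff_two_le.mpr h2
  have := Fin.nontrivial_iff_two_le.mpr h3
  have h01 (n : ℕ) (hn : 2 ≤ n) : (⟨0, by omega⟩ : Fin n) ≠ ⟨1, by omega⟩ := by simp
  have hmax := maximal_isIndep_evenSubcube (h01 n1 h1) (h01 n2 h2) (h01 n3 h3)
  refine ⟨iNum_eq_of_forall_le hmax (ncard_evenSubcube (h01 n1 h1) (h01 n2 h2) (h01 n3 h3))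
    fun T hT => ?_, hmax⟩
  have h4 := four_le_encard_of_isDominating (isDominating_of_maximal_isIndep hT)
  rwa [← T.toFinite.cast_ncard_eq, Nat.ofNat_le_cast] at h4
end

section
/- For the direct product G = K_2 × K_n with n ≥ 2, the irredundance number satisfies ir(G) = 2. -/
open SimpleGraph

/-! A column `{(0, z), (1, z)}` of `K₂ × Kₙ` is independent and dominating, hence maximal
irredundant. Conversely every vertex `(a, y)` has the non-neighbour `(a + 1, y)`, so neither `∅`
nor a singleton is maximal irredundant. -/

section Irredundance

variable {V : Type*} {G : SimpleGraph V} {S : Set V}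

theorem IsIndep.isIrredundant (hS : IsIndep G S) : IsIrredundant G S := by
  intro v hv
  refine ⟨v, Or.inl rfl, fun w hw hwv hvw => ?_⟩
  rcases hvw with rfl | hadj
  · exact hwv rfl
  · exact hS w hw v hv hadj

theorem isIndep_pair {v w : V} (h : ¬ G.Adj v w) : IsIndep G {v, w} := by
  rintro x (rfl | rfl) y (rfl | rfl) hxy
  exacts [G.loopless.irrefl _ hxy, h hxy, h hxy.symm, G.loopless.irrefl _ hxy]

/-- A private neighbour of a new vertex would have to escape the closed neighbourhoods of `S`,
which cover everything. -/
theorem IsDominating.maximal_isIrredundant (hD : IsDominating G S) (hI : IsIrredundant G S) :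
    Maximal (IsIrredundant G) S := by
  refine ⟨hI, fun T hT hST w hwT => ?_⟩
  by_contra hwS
  obtain ⟨u, -, hpriv⟩ := hT w hwT
  rcases hD u with huS | ⟨s, hsS, hsu⟩
  · exact hpriv u (hST huS) (fun h => hwS (h ▸ huS)) (Or.inl rfl)
  · exact hpriv s (hST hsS) (fun h => hwS (h ▸ hsS)) (Or.inr hsu)

theorem Maximal.isIrredundant_nonempty [Nonempty V] (hS : Maximal (IsIrredundant G) S) :
    S.Nonempty := by
  obtain ⟨v⟩ := ‹Nonempty V›
  by_contra hempty
  have hv : IsIrredundant G {v} := by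
    simpa only [Set.pair_eq_singleton] using (isIndep_pair (G.loopless.irrefl v)).isIrredundant
  exact hempty ⟨v, hS.2 hv (fun x hx => (hempty ⟨x, hx⟩).elim) rfl⟩

theorem Maximal.isIrredundant_ne_singleton (hS : Maximal (IsIrredundant G) S) {v w : V}
    (hwv : w ≠ v) (hvw : ¬ G.Adj v w) : S ≠ {v} := by
  rintro rfl
  have hsub : ({v} : Set V) ⊆ {v, w} := Set.singleton_subset_iff.2 (Set.mem_insert v _)
  exact hwv (hS.2 (isIndep_pair hvw).isIrredundant hsub (Set.mem_insert_of_mem v rfl))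

theorem two_le_ncard_of_maximal_isIrredundant [Finite V] [Nonempty V]
    (hnonadj : ∀ v, ∃ w ≠ v, ¬ G.Adj v w) (hS : Maximal (IsIrredundant G) S) :
    2 ≤ S.ncard := by
  by_contra! hlt
  rcases (Set.ncard_le_one_iff_eq S.toFinite).1 (Nat.le_of_lt_succ hlt) with hS0 | ⟨v, hSv⟩
  · exact hS.isIrredundant_nonempty.ne_empty hS0
  · obtain ⟨w, hwv, hvw⟩ := hnonadj v
    exact hS.isIrredundant_ne_singleton hwv hvw hSv

theorem irNum_eq_of_maximal_isIrredundant {k : ℕ}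
    (hS : Maximal (IsIrredundant G) S) (hk : S.ncard = k)
    (hle : ∀ T : Set V, Maximal (IsIrredundant G) T → k ≤ T.ncard) : irNum G = k :=
  le_antisymm (Nat.sInf_le ⟨S, hS, hk⟩)
    (le_csInf ⟨k, S, hS, hk⟩ fun _ ⟨T, hT, hTk⟩ => hTk ▸ hle T hT)

end Irredundance

section ProdComplete

variable {n : ℕ}

theorem prodComplete2_adj {m : ℕ} {x y : Fin m × Fin n} :
    (prodComplete2 m n).Adj x y ↔ x.1 ≠ y.1 ∧ x.2 ≠ y.2 :=
  Iff.rfl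

theorem prodComplete2_two_exists_ne_not_adj (v : Fin 2 × Fin n) :
    ∃ w ≠ v, ¬ (prodComplete2 2 n).Adj v w :=
  ⟨(v.1 + 1, v.2), fun h => by simpa using congrArg Prod.fst h,
    fun h => (prodComplete2_adj.1 h).2 rfl⟩

theorem prodComplete2_two_isIndep_column (z : Fin n) :
    IsIndep (prodComplete2 2 n) {(0, z), (1, z)} :=
  isIndep_pair fun h => (prodComplete2_adj.1 h).2 rfl

theorem prodComplete2_two_isDominating_column (z : Fin n) :
    IsDominating (prodComplete2 2 n) {(0, z), (1, z)} := by
  rintro ⟨a, y⟩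
  by_cases hy : y = z
  · subst hy
    fin_cases a <;> simp
  · right
    refine ⟨(a + 1, z), ?_, prodComplete2_adj.2 ⟨by simp, Ne.symm hy⟩⟩
    fin_cases a <;> simp

end ProdComplete

theorem stmt7 (n : ℕ) (hn : 2 ≤ n) : irNum (prodComplete2 2 n) = 2 := by
  have z : Fin n := ⟨0, by omega⟩
  have : Nonempty (Fin 2 × Fin n) := ⟨(0, z)⟩
  have hcolumn : ((0, z) : Fin 2 × Fin n) ≠ (1, z) := by simp
  exact irNum_eq_of_maximal_isIrredundant
    ((prodComplete2_two_isDominating_column z).maximal_isIrredundant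
      (prodComplete2_two_isIndep_column z).isIrredundant)
    (Set.ncard_pair hcolumn)
    fun _ => two_le_ncard_of_maximal_isIrredundant prodComplete2_two_exists_ne_not_adj
end

section
/- Let n = p_1 p_2 ··· p_t be a product of t ≥ 3 distinct primes. Then the lower independence number of the unitary Cayley graph satisfies i(X_n) ≤ 4·p_1 p_2 ··· p_{t-3}, where p_1 < ··· < p_t. -/
open SimpleGraph

/-!
Units lift along `ZMod (a * m) → ZMod m`, so for `a` coprime to `m` the preimage of a maximal
independent set of `X_m` is a maximal independent set of `X_{am}`, `a` times as large; hence
`i(X_{am}) ≤ a · i(X_m)`. Take `m` to be the product of the three largest primes. By the Chinese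
remainder theorem `X_m` is the graph on `𝔽_p × 𝔽_q × 𝔽_r` in which two points are adjacent when
they differ in every coordinate, and there the even-weight words `000, 101, 110, 011` of `{0,1}³`
form a maximal independent set: any two share a coordinate, and any other point differs
everywhere from one of them.
-/

/-- `unitaryCayley n` is `unitCayley (ZMod n)` by definition. -/
def unitCayley (R : Type*) [Ring R] : SimpleGraph R where
  Adj a b := a ≠ b ∧ IsUnit (a - b)
  symm := ⟨fun _ _ ⟨hne, hu⟩ => ⟨hne.symm, by simpa only [neg_sub] using hu.neg⟩⟩
  loopless := ⟨fun _ h => h.1 rfl⟩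

theorem unitCayley_adj_iff {R : Type*} [Ring R] [Nontrivial R] {a b : R} :
    (unitCayley R).Adj a b ↔ IsUnit (a - b) :=
  ⟨And.right, fun hu => ⟨fun h => by simp [h] at hu, hu⟩⟩

section Independence

variable {V : Type*} {G : SimpleGraph V} {S : Set V}

theorem maximal_isIndep_iff : Maximal (IsIndep G) S ↔ IsIndep G S ∧ IsDominating G S := by
  refine ⟨fun hS => ⟨hS.1, fun v => or_iff_not_imp_left.2 fun hv => ?_⟩, fun ⟨hS, hD⟩ => ⟨hS, ?_⟩⟩
  · by_contra! hnadj
    have hins : IsIndep G (insert v S) := by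
      rintro x (rfl | hx) y (rfl | hy) hxy
      · exact G.loopless.irrefl _ hxy
      · exact hnadj y hy hxy.symm
      · exact hnadj x hx hxy
      · exact hS.1 x hx y hy hxy
    exact hv (hS.2 hins (Set.subset_insert v S) (Set.mem_insert v S))
  · intro T hT hST v hv
    obtain hvS | ⟨u, hu, huv⟩ := hD v
    · exact hvS
    · exact (hT u (hST hu) v hv huv).elim

theorem iNum_le_ncard (hS : Maximal (IsIndep G) S) : iNum G ≤ S.ncard :=
  Nat.sInf_le ⟨S, hS, rfl⟩

theorem exists_maximal_isIndep_ncard_eq_iNum [Finite V] (G : SimpleGraph V) :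
    ∃ S, Maximal (IsIndep G) S ∧ S.ncard = iNum G := by
  have hindep : IsIndep G ∅ := fun _ h => h.elim
  obtain ⟨S, -, hS⟩ := Finite.exists_le_maximal hindep
  exact Nat.sInf_mem (s := {k | ∃ S, Maximal (IsIndep G) S ∧ S.ncard = k}) ⟨S.ncard, S, hS, rfl⟩

end Independence

theorem ncard_preimage_equivLike {α β F : Type*} [EquivLike F α β] (e : F) (s : Set β) :
    (e ⁻¹' s).ncard = s.ncard :=
  Set.ncard_preimage_of_injective_subset_range (EquivLike.injective e)
    (by simp [(EquivLike.surjective e).range_eq])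

section Comap

variable {R S : Type*} [Ring R] [Ring S]

theorem maximal_isIndep_unitCayley_comap [Nontrivial S] (f : R →+* S)
    (hf : Function.Surjective (Units.map (f : R →* S))) {T : Set S}
    (hT : Maximal (IsIndep (unitCayley S)) T) :
    Maximal (IsIndep (unitCayley R)) (f ⁻¹' T) := by
  have : Nontrivial R := f.domain_nontrivial
  obtain ⟨hTindep, hTdom⟩ := maximal_isIndep_iff.1 hT
  refine maximal_isIndep_iff.2 ⟨fun x hx y hy hxy => ?_, fun y => ?_⟩
  · have hu : IsUnit (f x - f y) := by simpa only [map_sub] using hxy.2.map f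
    exact hTindep _ hx _ hy (unitCayley_adj_iff.2 hu)
  · refine (hTdom (f y)).imp id fun ⟨s, hs, hsy⟩ => ?_
    obtain ⟨u, hu⟩ := unitCayley_adj_iff.1 hsy
    obtain ⟨v, rfl⟩ := hf u
    have hfv : f v = s - f y := hu
    refine ⟨y + v, ?_, unitCayley_adj_iff.2 (by simp)⟩
    rwa [Set.mem_preimage, map_add, hfv, add_sub_cancel]

theorem RingEquiv.surjective_unitsMap (e : R ≃+* S) :
    Function.Surjective (Units.map (e : R →* S)) :=
  fun u => ⟨Units.map (e.symm : S →* R) u, Units.ext (by simp)⟩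

theorem surjective_unitsMap_snd :
    Function.Surjective (Units.map (RingHom.snd R S : R × S →* S)) :=
  fun u => ⟨MulEquiv.prodUnits.symm (1, u), Units.ext rfl⟩

end Comap

theorem iNum_unitaryCayley_mul_le {a m : ℕ} (h : a.Coprime m) (hm : 1 < m) :
    iNum (unitaryCayley (a * m)) ≤ a * iNum (unitaryCayley m) := by
  have : Fact (1 < m) := ⟨hm⟩
  have : NeZero m := ⟨by omega⟩
  obtain ⟨T, hT, hcard⟩ := exists_maximal_isIndep_ncard_eq_iNum (unitaryCayley m)
  let e := ZMod.chineseRemainder h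
  have hS := maximal_isIndep_unitCayley_comap e.toRingHom e.surjective_unitsMap
    (maximal_isIndep_unitCayley_comap _ surjective_unitsMap_snd hT)
  calc iNum (unitaryCayley (a * m)) ≤ (e ⁻¹' (Prod.snd ⁻¹' T)).ncard := iNum_le_ncard hS
    _ = a * iNum (unitaryCayley m) := by
      rw [ncard_preimage_equivLike, ← Set.univ_prod, Set.ncard_prod, Set.ncard_univ,
        Nat.card_zmod, hcard]

section ParityCode

variable {K₁ K₂ K₃ : Type*} [DivisionRing K₁] [DivisionRing K₂] [DivisionRing K₃]

variable (K₁ K₂ K₃) in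
def parityCode : Set (K₁ × K₂ × K₃) := {(0, 0, 0), (1, 0, 1), (1, 1, 0), (0, 1, 1)}

theorem unitCayley_prod_adj_iff {x y : K₁ × K₂ × K₃} :
    (unitCayley (K₁ × K₂ × K₃)).Adj x y ↔ x.1 ≠ y.1 ∧ x.2.1 ≠ y.2.1 ∧ x.2.2 ≠ y.2.2 := by
  simp only [unitCayley_adj_iff, Prod.isUnit_iff, Prod.fst_sub, Prod.snd_sub, isUnit_iff_ne_zero,
    sub_ne_zero]

theorem isIndep_parityCode : IsIndep (unitCayley (K₁ × K₂ × K₃)) (parityCode K₁ K₂ K₃) := by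
  simp only [IsIndep, parityCode, Set.mem_insert_iff, Set.mem_singleton_iff,
    unitCayley_prod_adj_iff]
  rintro _ (rfl | rfl | rfl | rfl) _ (rfl | rfl | rfl | rfl) <;> simp

/- A coordinate where `w` is `0` or `1` rules out the two codewords agreeing with `w` there, and
these pairs lie in the three different perfect matchings of the four codewords. Three such pairs
cover all codewords only if they share a codeword, i.e. only if `w` is itself a codeword. -/
theorem isDominating_parityCode :
    IsDominating (unitCayley (K₁ × K₂ × K₃)) (parityCode K₁ K₂ K₃) := by
  rintro ⟨a, b, c⟩
  simp only [parityCode, Set.mem_insert_iff, Set.mem_singleton_iff, exists_eq_or_imp,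
    exists_eq_left, unitCayley_prod_adj_iff, Prod.mk.injEq]
  by_cases a = 0 <;> by_cases a = 1 <;> by_cases b = 0 <;> by_cases b = 1 <;>
    by_cases c = 0 <;> by_cases c = 1 <;> simp_all [eq_comm]

theorem maximal_isIndep_parityCode :
    Maximal (IsIndep (unitCayley (K₁ × K₂ × K₃))) (parityCode K₁ K₂ K₃) :=
  maximal_isIndep_iff.2 ⟨isIndep_parityCode, isDominating_parityCode⟩

theorem ncard_parityCode_le : (parityCode K₁ K₂ K₃).ncard ≤ 4 :=
  (Set.ncard_insert_le _ _).trans <| Nat.succ_le_succ <| (Set.ncard_insert_le _ _).trans <|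
    Nat.succ_le_succ <| (Set.ncard_insert_le _ _).trans <| by simp

end ParityCode

theorem iNum_unitaryCayley_mul_mul_le_four {p q r : ℕ} (hp : p.Prime) (hq : q.Prime)
    (hr : r.Prime) (hpq : p ≠ q) (hpr : p ≠ r) (hqr : q ≠ r) :
    iNum (unitaryCayley (p * (q * r))) ≤ 4 := by
  have : Fact p.Prime := ⟨hp⟩
  have : Fact q.Prime := ⟨hq⟩
  have : Fact r.Prime := ⟨hr⟩
  have hqr' : q.Coprime r := (Nat.coprime_primes hq hr).2 hqr
  have hpqr : p.Coprime (q * r) :=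
    Nat.Coprime.mul_right ((Nat.coprime_primes hp hq).2 hpq) ((Nat.coprime_primes hp hr).2 hpr)
  let e : ZMod (p * (q * r)) ≃+* ZMod p × ZMod q × ZMod r :=
    (ZMod.chineseRemainder hpqr).trans (RingEquiv.prodCongr (.refl _) (ZMod.chineseRemainder hqr'))
  calc iNum (unitaryCayley (p * (q * r))) ≤ (e ⁻¹' parityCode _ _ _).ncard :=
        iNum_le_ncard (maximal_isIndep_unitCayley_comap e.toRingHom e.surjective_unitsMap
          maximal_isIndep_parityCode)
    _ = (parityCode (ZMod p) (ZMod q) (ZMod r)).ncard := ncard_preimage_equivLike e _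
    _ ≤ 4 := ncard_parityCode_le

theorem stmt13 (t : ℕ) (ht : 3 ≤ t) (p : Fin t → ℕ) (hp : ∀ i, (p i).Prime)
    (hmono : StrictMono p) :
    iNum (unitaryCayley (∏ i, p i)) ≤
      4 * ∏ i : Fin (t - 3), p (Fin.castLE (by omega) i) := by
  set a := ∏ i : Fin (t - 3), p (Fin.castLE (by omega) i)
  let j (k : Fin 3) : Fin t := Fin.cast (by omega) (Fin.natAdd (t - 3) k)
  have hcop {i k : Fin t} (h : (i : ℕ) ≠ k) : (p i).Coprime (p k) :=
    (Nat.coprime_primes (hp i) (hp k)).2 (hmono.injective.ne (Fin.val_ne_iff.1 h))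
  have hsplit : ∏ i, p i = a * (p (j 0) * (p (j 1) * p (j 2))) := by
    rw [← Fin.prod_congr' p (by omega : t - 3 + 3 = t), Fin.prod_univ_add, Fin.prod_univ_three,
      mul_assoc]
    rfl
  have ha : a.Coprime (p (j 0) * (p (j 1) * p (j 2))) :=
    Nat.Coprime.prod_left fun i _ =>
      (hcop (by simp [j]; omega)).mul_right
        ((hcop (by simp [j]; omega)).mul_right (hcop (by simp [j]; omega)))
  have hm : 1 < p (j 0) * (p (j 1) * p (j 2)) :=
    one_lt_mul'' (hp _).one_lt (one_lt_mul'' (hp _).one_lt (hp _).one_lt)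
  rw [hsplit, mul_comm 4]
  calc iNum (unitaryCayley (a * (p (j 0) * (p (j 1) * p (j 2)))))
      ≤ a * iNum (unitaryCayley (p (j 0) * (p (j 1) * p (j 2)))) :=
        iNum_unitaryCayley_mul_le ha hm
    _ ≤ a * 4 := Nat.mul_le_mul_left a <| iNum_unitaryCayley_mul_mul_le_four (hp _) (hp _) (hp _)
        (hmono.injective.ne (by simp [j])) (hmono.injective.ne (by simp [j]))
        (hmono.injective.ne (by simp [j]))
end

section
/- Let G = K[a_1,b_1] × ··· × K[a_t,b_t] be a direct product of balanced complete multipartite graphs with 2 ≤ b_1 ≤ ··· ≤ b_t. Then the upper irredundance number satisfies IR(G) ≤ (1/b_1)·∏_{i=1}^t a_i b_i + (2/b_t)·∏_{i=1}^t b_i. -/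
open SimpleGraph

/-!
A vertex `v` has the part vector `i ↦ (v i).2`, and two vertices are adjacent iff their part
vectors differ in every coordinate. An irredundant set `S` splits into the vertices with no
neighbour in `S`, an independent set, and the rest. The independent part has at most
`∏ aᵢbᵢ / b₁` elements: the `b₁` simultaneous cyclic shifts of the part coordinates embed
`I × Fin b₁` into the vertex set. Every other `v ∈ S` has a private neighbour `u ≠ v`, whose part
vector differs from that of `v` everywhere and agrees somewhere with that of each other `w ∈ S`;
forgetting one coordinate `k` of it is then at most two-to-one, which gives `2 ∏ bᵢ / bₖ`.
-/

open Finset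

def cyclicShift {n : ℕ} (x : Fin n) (j : ℕ) : Fin n :=
  ⟨(x + j) % n, Nat.mod_lt _ x.pos⟩

lemma eq_of_cyclicShift_eq {n j : ℕ} {x y : Fin n} (h : cyclicShift x j = cyclicShift y j) :
    x = y :=
  Fin.ext ((Nat.ModEq.add_right_cancel' j (congrArg Fin.val h)).eq_of_lt_of_lt x.isLt y.isLt)

lemma eq_of_cyclicShift_eq_cyclicShift {n j j' : ℕ} {x : Fin n} (hj : j < n) (hj' : j' < n)
    (h : cyclicShift x j = cyclicShift x j') : j = j' :=
  (Nat.ModEq.add_left_cancel' x (congrArg Fin.val h)).eq_of_lt_of_lt hj hj'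

theorem card_mul_le_two_mul_card_pi {ι α : Type*} [Fintype ι] [DecidableEq ι] {β : ι → Type*}
    [∀ i, Fintype (β i)] [∀ i, DecidableEq (β i)] (T : Finset α) (π q : α → ∀ i, β i)
    (hq : ∀ v ∈ T, ∀ i, q v i ≠ π v i) (hmeet : ∀ v ∈ T, ∀ w ∈ T, w ≠ v → ∃ i, q v i = π w i)
    (k : ι) : #T * Fintype.card (β k) ≤ 2 * Fintype.card (∀ i, β i) := by
  set restrict : α → ∀ i : {i // i ≠ k}, β i := fun v i => q v i
  have meet_at_k : ∀ v ∈ T, ∀ w ∈ T, v ≠ w → restrict v = restrict w → q v k = π w k := by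
    intro v hv w hw hvw h
    obtain ⟨i, hi⟩ := hmeet v hv w hw hvw.symm
    by_cases hik : i = k
    · exact hik ▸ hi
    · have hvw_i : q v i = q w i := congrFun h ⟨i, hik⟩
      exact absurd (hvw_i.symm.trans hi) (hq w hw i)
  have fiber_le_two : ∀ r ∈ T.image restrict, #{v ∈ T | restrict v = r} ≤ 2 := by
    intro r _
    by_contra! h
    obtain ⟨u, hu, v, hv, w, hw, huv, huw, hvw⟩ := two_lt_card.1 h
    rw [mem_filter] at hu hv hw
    have hq_eq : q u = q v := by
      funext i
      by_cases hik : i = k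
      · subst hik
        rw [meet_at_k u hu.1 w hw.1 huw (hu.2.trans hw.2.symm),
          meet_at_k v hv.1 w hw.1 hvw (hv.2.trans hw.2.symm)]
      · exact congrFun (hu.2.trans hv.2.symm) ⟨i, hik⟩
    obtain ⟨i, hi⟩ := hmeet u hu.1 v hv.1 (Ne.symm huv)
    exact hq v hv.1 i (hq_eq ▸ hi)
  calc #T * Fintype.card (β k)
      ≤ 2 * #(T.image restrict) * Fintype.card (β k) :=
        Nat.mul_le_mul_right _ (card_le_mul_card_image T 2 fiber_le_two)
    _ ≤ 2 * Fintype.card (∀ i : {i // i ≠ k}, β i) * Fintype.card (β k) := by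
        gcongr
        exact card_le_univ _
    _ = 2 * Fintype.card (∀ i, β i) := by
        rw [Fintype.card_congr (Equiv.piSplitAt k β), Fintype.card_prod]
        ring

theorem exists_isIrredundant_ncard_eq_IRNum {V : Type*} [Finite V] (G : SimpleGraph V) :
    ∃ S, IsIrredundant G S ∧ S.ncard = IRNum G :=
  Nat.sSup_mem (s := {k | ∃ S, IsIrredundant G S ∧ S.ncard = k})
    ⟨0, ∅, fun _ hv => hv.elim, Set.ncard_empty _⟩
    ⟨Nat.card V, by rintro _ ⟨S, -, rfl⟩; exact Set.ncard_le_card S⟩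

section Multipartite

variable {ι : Type*} {a b : ι → ℕ}

lemma tensorPi_multipartite_adj_iff [Nonempty ι] {x y : ∀ i, Fin (a i) × Fin (b i)} :
    (tensorPi fun i => multipartite (a i) (b i)).Adj x y ↔ ∀ i, (x i).2 ≠ (y i).2 := by
  refine ⟨fun h => h.2, fun h => ⟨?_, h⟩⟩
  rintro rfl
  exact h (Classical.arbitrary ι) rfl

theorem IsIndep.card_mul_le [Fintype ι] {I : Finset (∀ i, Fin (a i) × Fin (b i))}
    (hI : IsIndep (tensorPi fun i => multipartite (a i) (b i)) I) {j : ι}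
    (hj : ∀ i, b j ≤ b i) : #I * b j ≤ ∏ i, a i * b i := by
  classical
  have : Nonempty ι := ⟨j⟩
  let shift : I × Fin (b j) → ∀ i, Fin (a i) × Fin (b i) :=
    fun vc i => ((vc.1.1 i).1, cyclicShift (vc.1.1 i).2 vc.2)
  have shift_injective : Function.Injective shift := by
    rintro ⟨⟨v, hv⟩, c⟩ ⟨⟨w, hw⟩, c'⟩ h
    have h₁ i : (v i).1 = (w i).1 := congrArg (fun f => (f i).1) h
    have h₂ i : cyclicShift (v i).2 c = cyclicShift (w i).2 c' := congrArg (fun f => (f i).2) h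
    obtain rfl | hcc := eq_or_ne c c'
    · obtain rfl : v = w := funext fun i => Prod.ext (h₁ i) (eq_of_cyclicShift_eq (h₂ i))
      rfl
    · refine absurd (tensorPi_multipartite_adj_iff.2 fun i hvw => hcc (Fin.ext ?_)) (hI v hv w hw)
      exact eq_of_cyclicShift_eq_cyclicShift (c.2.trans_le (hj i)) (c'.2.trans_le (hj i))
        (hvw ▸ h₂ i)
  simpa using Fintype.card_le_of_injective shift shift_injective

theorem IsIrredundant.exists_private_part [Nonempty ι] {S : Set (∀ i, Fin (a i) × Fin (b i))}
    (hS : IsIrredundant (tensorPi fun i => multipartite (a i) (b i)) S) {v w}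
    (hv : v ∈ S) (hw : w ∈ S) (hwv : (tensorPi fun i => multipartite (a i) (b i)).Adj w v) :
    ∃ p : ∀ i, Fin (b i), (∀ i, p i ≠ (v i).2) ∧ ∀ w ∈ S, w ≠ v → ∃ i, p i = (w i).2 := by
  obtain ⟨u, hu, hpriv⟩ := hS v hv
  have hvu := hu.resolve_left <| by
    rintro rfl
    exact hpriv w hw hwv.ne (Or.inr hwv)
  refine ⟨fun i => (u i).2, fun i h => tensorPi_multipartite_adj_iff.1 hvu i h.symm,
    fun w' hw' hne => ?_⟩
  by_contra! h
  exact hpriv w' hw' hne (Or.inr (tensorPi_multipartite_adj_iff.2 fun i => (h i).symm))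

theorem IsIrredundant.card_le [Fintype ι] {S : Finset (∀ i, Fin (a i) × Fin (b i))}
    (hS : IsIrredundant (tensorPi fun i => multipartite (a i) (b i)) S) {j : ι}
    (hj : ∀ i, b j ≤ b i) (k : ι) :
    (#S : ℝ) ≤ (∏ i, ((a i : ℝ) * b i)) / b j + 2 * (∏ i, (b i : ℝ)) / b k := by
  classical
  have : Nonempty ι := ⟨j⟩
  rcases S.eq_empty_or_nonempty with rfl | ⟨v₀, -⟩
  · rw [card_empty, Nat.cast_zero]
    positivity
  have hpos i : (0 : ℝ) < b i := by exact_mod_cast (v₀ i).2.pos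
  set G := tensorPi fun i => multipartite (a i) (b i)
  set I := S.filter fun v => ∀ w ∈ S, ¬ G.Adj w v
  set T := S.filter fun v => ¬ ∀ w ∈ S, ¬ G.Adj w v
  have hI_indep : IsIndep G I := fun v hv w hw => (mem_filter.1 hw).2 v (mem_filter.1 hv).1
  have hI : #I * b j ≤ ∏ i, a i * b i := hI_indep.card_mul_le hj
  have hT : #T * b k ≤ 2 * ∏ i, b i := by
    have hp : ∀ v ∈ T, ∃ p : ∀ i, Fin (b i),
        (∀ i, p i ≠ (v i).2) ∧ ∀ w ∈ S, w ≠ v → ∃ i, p i = (w i).2 := by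
      intro v hv
      obtain ⟨hvS, hv⟩ := mem_filter.1 hv
      push Not at hv
      obtain ⟨w, hwS, hwv⟩ := hv
      exact hS.exists_private_part hvS hwS hwv
    have : Nonempty (∀ i, Fin (b i)) := ⟨fun i => (v₀ i).2⟩
    choose! p hp_ne hp_meet using hp
    simpa using card_mul_le_two_mul_card_pi T (fun v i => (v i).2) p hp_ne
      (fun v hv w hw hwv => hp_meet v hv w (mem_filter.1 hw).1 hwv) k
  rw [← card_filter_add_card_filter_not (fun v => ∀ w ∈ S, ¬ G.Adj w v), Nat.cast_add]
  refine add_le_add ?_ ?_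
  · rw [le_div_iff₀ (hpos j)]
    exact_mod_cast hI
  · rw [le_div_iff₀ (hpos k)]
    exact_mod_cast hT

end Multipartite

theorem stmt15 (t : ℕ) (ht : 1 ≤ t) (a b : Fin t → ℕ)
    (hmono : Monotone b) :
    (IRNum (prodMultipartite t a b) : ℝ) ≤
      (∏ i, ((a i : ℝ) * b i)) / b ⟨0, by omega⟩ +
        2 * (∏ i, (b i : ℝ)) / b ⟨t - 1, by omega⟩ := by
  obtain ⟨S, hS, hcard⟩ := exists_isIrredundant_ncard_eq_IRNum (prodMultipartite t a b)
  rw [← hcard, Set.ncard_eq_toFinset_card S]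
  rw [← S.toFinite.coe_toFinset] at hS
  exact hS.card_le (fun i => hmono (Nat.zero_le i.val)) _
end

section
/- There exist positive integers n with arbitrarily many distinct prime factors such that the unitary Cayley graph X_n has a total dominating set of size at most g(n) - 2, where g is the Jacobsthal function. More precisely: for every prime q ≡ 1 (mod 3) and primes 2q+10 < p_1 < ··· < p_k with k = (2q-2)/3, the integer n = 6q·p_1···p_k satisfies γ_t(X_n) ≤ 2q + 6 ≤ g(n) - 2. -/
open SimpleGraph

/-!
By the Chinese remainder theorem, `a - b` is a unit of `ZMod n` iff `a ≢ b` modulo every prime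
`ℓ ∣ n`, and every choice of residues modulo these primes is realised. So a set of vertices is
totally dominating as soon as, for every residue pattern, one of its members differs from it modulo
each prime; and `m < g(n)` as soon as the positions `0, …, m - 1` can be covered by choosing one
residue class per prime.

Write `q = 3r + 1`, so `k = 2r`. The dominating set has the `2(q + 3)` vertices with prescribed
parity, whose residue modulo `q` and every `pᵢ` is an offset `t < q + 3`, and whose residue modulo
`3` is the block of `t` among three consecutive blocks. Given a vertex, the parity is avoided by the
first coordinate, each `pᵢ` forbids at most one offset, and `3` and `q` together forbid at most
`r + 3`, so one of the `3r + 4` offsets survives. For the Jacobsthal bound, in a run of length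
`2q + 7` the prime `2` covers the even positions, `3` those `≡ 1 mod 3`, `q` the positions `3` and
`2q + 3`, and the `2r` remaining odd positions are given one to each `pᵢ`.
-/

open Finset Function

theorem Nat.exists_int_modEq_primeFactors (n : ℕ) (b : ℕ → ℤ) :
    ∃ y : ℤ, ∀ ℓ ∈ n.primeFactors, y ≡ b ℓ [ZMOD ℓ] := by
  have hcop : Pairwise (IsCoprime on fun ℓ : n.primeFactors ↦ Ideal.span {(ℓ : ℤ)}) := by
    intro ℓ ℓ' hne
    rw [onFun, Ideal.isCoprime_span_singleton_iff, Nat.isCoprime_iff_coprime,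
      Nat.coprime_primes (Nat.prime_of_mem_primeFactors ℓ.2) (Nat.prime_of_mem_primeFactors ℓ'.2)]
    exact fun h ↦ hne (Subtype.ext h)
  obtain ⟨y, hy⟩ := Ideal.exists_forall_sub_mem_ideal hcop fun ℓ ↦ b ℓ
  exact ⟨y, fun ℓ hℓ ↦ (Int.modEq_iff_dvd.mpr (Ideal.mem_span_singleton.mp (hy ⟨ℓ, hℓ⟩))).symm⟩

theorem ZMod.isUnit_intCast_iff_forall_primeFactors {n : ℕ} (hn : n ≠ 0) (x : ℤ) :
    IsUnit (x : ZMod n) ↔ ∀ ℓ ∈ n.primeFactors, ¬ (ℓ : ℤ) ∣ x := by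
  rw [ZMod.coe_int_isUnit_iff_isCoprime, Int.isCoprime_iff_gcd_eq_one]
  change Nat.Coprime n x.natAbs ↔ _
  refine ⟨fun h ℓ hℓ hdvd ↦ ?_, fun h ↦ Nat.coprime_of_dvd fun ℓ hℓ hℓn hℓx ↦
    h ℓ (Nat.mem_primeFactors.mpr ⟨hℓ, hℓn, hn⟩) (Int.natCast_dvd.mpr hℓx)⟩
  exact (Nat.prime_of_mem_primeFactors hℓ).one_lt.ne'
    (Nat.eq_one_of_dvd_coprimes h (Nat.dvd_of_mem_primeFactors hℓ) (Int.natCast_dvd.mp hdvd))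

theorem Int.exists_lt_gcd_add_eq_one {n : ℕ} (hn : n ≠ 0) (x : ℤ) :
    ∃ i < n, Int.gcd (x + i) n = 1 := by
  have hpos : (0 : ℤ) < n := by exact_mod_cast Nat.pos_of_ne_zero hn
  have h0 := Int.emod_nonneg (1 - x) hpos.ne'
  have h1 := Int.emod_lt_of_pos (1 - x) hpos
  refine ⟨((1 - x) % n).toNat, by omega, ?_⟩
  rw [← Int.gcd_emod, Int.toNat_of_nonneg h0, Int.add_emod, Int.emod_emod, ← Int.add_emod,
    add_sub_cancel, Int.gcd_emod, Int.gcd_one_left]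

theorem unitaryCayley_adj_of_isUnit {n : ℕ} [Nontrivial (ZMod n)] {a b : ZMod n}
    (h : IsUnit (a - b)) : (unitaryCayley n).Adj a b :=
  ⟨fun hab ↦ not_isUnit_zero (sub_eq_zero.mpr hab ▸ h), h⟩

theorem totalDomNum_unitaryCayley_le {n : ℕ} (hn : 1 < n) {ι : Type*} [Finite ι]
    (a : ι → ℕ → ℤ) (ha : ∀ v : ℤ, ∃ w, ∀ ℓ ∈ n.primeFactors, ¬ a w ℓ ≡ v [ZMOD ℓ]) :
    totalDomNum (unitaryCayley n) ≤ Nat.card ι := by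
  have : Fact (1 < n) := ⟨hn⟩
  choose x hx using fun w ↦ n.exists_int_modEq_primeFactors (a w)
  have hdom : IsTotalDominating (unitaryCayley n) (Set.range fun w ↦ (x w : ZMod n)) := by
    intro v
    obtain ⟨w, hw⟩ := ha (v.cast : ℤ)
    refine ⟨_, ⟨w, rfl⟩, unitaryCayley_adj_of_isUnit ?_⟩
    rw [← ZMod.intCast_zmod_cast v, ← Int.cast_sub,
      ZMod.isUnit_intCast_iff_forall_primeFactors (by omega)]
    exact fun ℓ hℓ hdvd ↦ hw ℓ hℓ ((hx w ℓ hℓ).symm.trans (Int.modEq_iff_dvd.mpr hdvd).symm)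
  calc totalDomNum (unitaryCayley n) ≤ (Set.range fun w ↦ (x w : ZMod n)).ncard :=
        Nat.sInf_le ⟨_, hdom, rfl⟩
    _ ≤ Nat.card ι := Finite.card_range_le _

theorem lt_jacobsthal_of_covering {n m : ℕ} (hn : n ≠ 0) (c : ℕ → ℤ)
    (hc : ∀ i < m, ∃ ℓ ∈ n.primeFactors, (i : ℤ) ≡ c ℓ [ZMOD ℓ]) : m < jacobsthal n := by
  obtain ⟨y, hy⟩ := n.exists_int_modEq_primeFactors (-c ·)
  refine Nat.lt_of_succ_le (le_csInf ⟨n, Nat.pos_of_ne_zero hn, Int.exists_lt_gcd_add_eq_one hn⟩ ?_)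
  rintro b ⟨-, hb⟩
  by_contra! hbm
  obtain ⟨i, hib, hgcd⟩ := hb y
  obtain ⟨ℓ, hℓ, hi⟩ := hc i (by omega)
  have hdvd : (ℓ : ℤ) ∣ y + i := by
    simpa using ((hy ℓ hℓ).add hi).symm.dvd
  have := Int.isCoprime_iff_gcd_eq_one.mpr hgcd
  exact (Nat.prime_iff_prime_int.mp (Nat.prime_of_mem_primeFactors hℓ)).not_isUnit
    (this.isUnit_of_dvd' hdvd (Int.natCast_dvd_natCast.mpr (Nat.dvd_of_mem_primeFactors hℓ)))

theorem Nat.mem_primeFactors_prod_iff {k ℓ : ℕ} {p : Fin k → ℕ} (hp : ∀ i, (p i).Prime) :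
    ℓ ∈ (∏ i, p i).primeFactors ↔ ∃ i, p i = ℓ := by
  rw [Nat.mem_primeFactors_of_ne_zero (prod_ne_zero_iff.mpr fun i _ ↦ (hp i).ne_zero)]
  constructor
  · rintro ⟨hℓ, hdvd⟩
    obtain ⟨i, -, hi⟩ := (Prime.dvd_finsetProd_iff hℓ.prime p).mp hdvd
    exact ⟨i, ((Nat.prime_dvd_prime_iff_eq hℓ (hp i)).mp hi).symm⟩
  · rintro ⟨i, rfl⟩
    exact ⟨hp i, dvd_prod_of_mem p (mem_univ i)⟩

theorem Nat.mem_primeFactors_six_mul_mul_prod_iff {q k ℓ : ℕ} {p : Fin k → ℕ} (hq : q.Prime)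
    (hp : ∀ i, (p i).Prime) :
    ℓ ∈ (6 * q * ∏ i, p i).primeFactors ↔ ℓ = 2 ∨ ℓ = 3 ∨ ℓ = q ∨ ∃ i, p i = ℓ := by
  rw [Nat.primeFactors_mul (by positivity [hq.pos]) (prod_ne_zero_iff.mpr fun i _ ↦ (hp i).ne_zero),
    Nat.primeFactors_mul (by norm_num) hq.ne_zero, show 6 = 2 * 3 from rfl,
    Nat.primeFactors_mul (by norm_num) (by norm_num), Nat.prime_two.primeFactors,
    Nat.prime_three.primeFactors, hq.primeFactors]
  simp only [mem_union, mem_singleton, Nat.mem_primeFactors_prod_iff hp, or_assoc]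

theorem card_filter_intModEq_Ico_le_one {a b ℓ : ℕ} (h : b ≤ a + ℓ) (v : ℤ) :
    #{t ∈ Ico a b | ((t : ℕ) : ℤ) ≡ v [ZMOD ℓ]} ≤ 1 := by
  refine card_le_one.mpr fun s hs t ht ↦ ?_
  simp only [mem_filter, mem_Ico] at hs ht
  have := Int.eq_zero_of_abs_lt_dvd (hs.2.trans ht.2.symm).dvd
    (abs_sub_lt_iff.mpr ⟨by omega, by omega⟩)
  omega

theorem le_card_filter_not_intModEq_Ico {a b ℓ : ℕ} (h : b ≤ a + ℓ) (v : ℤ) :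
    b - a - 1 ≤ #{t ∈ Ico a b | ¬ ((t : ℕ) : ℤ) ≡ v [ZMOD ℓ]} := by
  have := card_filter_add_card_filter_not (s := Ico a b) (fun t : ℕ ↦ (t : ℤ) ≡ v [ZMOD ℓ])
  have := card_filter_intModEq_Ico_le_one h v
  rw [Nat.card_Ico] at *
  omega

-- The first block is the largest and contains `0, 1, 2`, so it meets every pair `{c, c + 3r + 1}`
-- of offsets below `3r + 4`.
def blockIndex (r t : ℕ) : ℕ := if t < r + 2 then 0 else if t < 2 * r + 3 then 1 else 2

theorem le_card_filter_not_intModEq_blockIndex {r : ℕ} (hr : 2 ≤ r) (v : ℤ) :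
    2 * r + 1 ≤ #{t ∈ range (3 * r + 4) |
      ¬ ((blockIndex r t : ℕ) : ℤ) ≡ v [ZMOD 3] ∧ ¬ ((t : ℕ) : ℤ) ≡ v [ZMOD ↑(3 * r + 1)]} := by
  set T := {t ∈ range (3 * r + 4) |
    ¬ ((blockIndex r t : ℕ) : ℤ) ≡ v [ZMOD 3] ∧ ¬ ((t : ℕ) : ℤ) ≡ v [ZMOD ↑(3 * r + 1)]}
  have hblock : ∀ t, ((blockIndex r t : ℕ) : ℤ) ≡ v [ZMOD 3] ↔ (blockIndex r t : ℤ) = v % 3 := by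
    intro t
    unfold blockIndex Int.ModEq
    split_ifs <;> omega
  have hsub : ∀ a b, b ≤ 3 * r + 4 → (∀ t, a ≤ t → t < b → (blockIndex r t : ℤ) ≠ v % 3) →
      {t ∈ Ico a b | ¬ ((t : ℕ) : ℤ) ≡ v [ZMOD ↑(3 * r + 1)]} ⊆ T := by
    intro a b hb hab t ht
    simp only [T, mem_filter, mem_Ico, mem_range, hblock] at ht ⊢
    exact ⟨by omega, hab t ht.1.1 ht.1.2, ht.2⟩
  have hv := Int.emod_nonneg v (by norm_num : (3 : ℤ) ≠ 0)
  have hv' := Int.emod_lt_of_pos v (by norm_num : (0 : ℤ) < 3)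
  obtain h0 | h1 | h2 : v % 3 = 0 ∨ v % 3 = 1 ∨ v % 3 = 2 := by omega
  · have := le_card_filter_not_intModEq_Ico (a := r + 2) (b := 3 * r + 4) (ℓ := 3 * r + 1)
      (by omega) v
    refine le_trans (by omega) (card_le_card (hsub (r + 2) (3 * r + 4) le_rfl fun t ht _ ↦ ?_))
    unfold blockIndex; split_ifs <;> omega
  · have hA := le_card_filter_not_intModEq_Ico (a := 0) (b := r + 2) (ℓ := 3 * r + 1) (by omega) v
    have hB := le_card_filter_not_intModEq_Ico (a := 2 * r + 3) (b := 3 * r + 4) (ℓ := 3 * r + 1)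
      (by omega) v
    have hdisj : Disjoint {t ∈ Ico 0 (r + 2) | ¬ ((t : ℕ) : ℤ) ≡ v [ZMOD ↑(3 * r + 1)]}
        {t ∈ Ico (2 * r + 3) (3 * r + 4) | ¬ ((t : ℕ) : ℤ) ≡ v [ZMOD ↑(3 * r + 1)]} :=
      disjoint_filter_filter <| disjoint_left.mpr fun t ht ht' ↦ by
        simp only [mem_Ico] at ht ht'
        omega
    calc 2 * r + 1 ≤ _ := by omega
      _ = _ := (card_union_of_disjoint hdisj).symm
      _ ≤ #T := card_le_card <| union_subset
          (hsub 0 (r + 2) (by omega) fun t _ ht ↦ by rw [blockIndex, if_pos ht]; omega)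
          (hsub (2 * r + 3) (3 * r + 4) le_rfl fun t ht _ ↦ by
            unfold blockIndex; split_ifs <;> omega)
  · have := le_card_filter_not_intModEq_Ico (a := 0) (b := 2 * r + 3) (ℓ := 3 * r + 1)
      (by omega) v
    refine le_trans (by omega) (card_le_card (hsub 0 (2 * r + 3) (by omega) fun t _ ht ↦ ?_))
    unfold blockIndex; split_ifs <;> omega

def dominatingPattern (r : ℕ) (w : Fin 2 × Fin (3 * r + 4)) (ℓ : ℕ) : ℤ :=
  if ℓ = 2 then (w.1 : ℕ) else if ℓ = 3 then (blockIndex r w.2 : ℕ) else (w.2 : ℕ)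

theorem exists_dominatingPattern_not_intModEq {r k : ℕ} (hr : 2 ≤ r) (p : Fin k → ℕ)
    (hk : k ≤ 2 * r) (hp : ∀ j, 3 * r + 4 ≤ p j) (v : ℤ) :
    ∃ w, ∀ ℓ, (ℓ = 2 ∨ ℓ = 3 ∨ ℓ = 3 * r + 1 ∨ ∃ j, p j = ℓ) →
      ¬ dominatingPattern r w ℓ ≡ v [ZMOD ℓ] := by
  -- the only offset below `p j` congruent to `v` modulo `p j`
  set P := univ.image fun j ↦ (v % p j).toNat
  have hP : #P < #{t ∈ range (3 * r + 4) |
      ¬ ((blockIndex r t : ℕ) : ℤ) ≡ v [ZMOD 3] ∧ ¬ ((t : ℕ) : ℤ) ≡ v [ZMOD ↑(3 * r + 1)]} := by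
    have := le_card_filter_not_intModEq_blockIndex hr v
    have : #P ≤ k := card_image_le.trans (by simp)
    omega
  obtain ⟨t, ht, htP⟩ := exists_mem_notMem_of_card_lt_card hP
  simp only [mem_filter, mem_range] at ht
  refine ⟨(if v % 2 = 0 then 1 else 0, ⟨t, ht.1⟩), ?_⟩
  rintro ℓ (rfl | rfl | rfl | ⟨j, rfl⟩)
  · rw [dominatingPattern, if_pos rfl, Int.ModEq]
    split_ifs <;> simp only [Fin.val_one, Fin.val_zero, Nat.cast_one, Nat.cast_zero] <;> omega
  · simpa [dominatingPattern] using ht.2.1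
  · simpa [dominatingPattern, show 3 * r + 1 ≠ 2 by omega, show 3 * r + 1 ≠ 3 by omega]
      using ht.2.2
  · have := hp j
    rw [dominatingPattern, if_neg (by omega), if_neg (by omega)]
    intro h
    refine htP (mem_image.mpr ⟨j, mem_univ j, ?_⟩)
    rw [Int.ModEq, Int.emod_eq_of_lt (by omega) (by omega)] at h
    simp [← h]

def coveredPosition (r j : ℕ) : ℕ := if j < r then 6 * j + 5 else 6 * (j - r) + 9

theorem exists_coveredPosition_eq {r i : ℕ} (hi : i < 6 * r + 9) (h2 : i % 2 = 1)
    (h3 : i % 3 ≠ 1) (hi3 : i ≠ 3) (hi5 : i ≠ 6 * r + 5) :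
    ∃ j < 2 * r, coveredPosition r j = i := by
  by_cases h : i % 6 = 5
  · exact ⟨(i - 5) / 6, by omega, by rw [coveredPosition, if_pos (by omega)]; omega⟩
  · exact ⟨r + (i - 9) / 6, by omega, by rw [coveredPosition, if_neg (by omega)]; omega⟩

noncomputable def coveringPattern (r : ℕ) {k : ℕ} (p : Fin k → ℕ) (ℓ : ℕ) : ℤ :=
  if ℓ = 2 then 0 else if ℓ = 3 then 1 else if ℓ = 3 * r + 1 then 3
  else extend p (fun j ↦ (coveredPosition r j : ℤ)) 0 ℓ

theorem exists_intModEq_coveringPattern {r k : ℕ} (hr : 1 ≤ r) (hk : 2 * r ≤ k)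
    {p : Fin k → ℕ} (hinj : Injective p) (hp : ∀ j, 3 * r + 1 < p j) {i : ℕ}
    (hi : i < 6 * r + 9) :
    ∃ ℓ, (ℓ = 2 ∨ ℓ = 3 ∨ ℓ = 3 * r + 1 ∨ ∃ j, p j = ℓ) ∧
      (i : ℤ) ≡ coveringPattern r p ℓ [ZMOD ℓ] := by
  by_cases h2 : i % 2 = 0
  · exact ⟨2, by simp, by rw [coveringPattern, if_pos rfl, Int.ModEq]; omega⟩
  by_cases h3 : i % 3 = 1
  · exact ⟨3, by simp, by rw [coveringPattern, if_neg (by norm_num), if_pos rfl, Int.ModEq]; omega⟩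
  have hq2 : 3 * r + 1 ≠ 2 := by omega
  have hq3 : 3 * r + 1 ≠ 3 := by omega
  obtain rfl | hi3 := eq_or_ne i 3
  · exact ⟨3 * r + 1, by simp, by simp [coveringPattern, hq2, hq3]⟩
  obtain rfl | hi5 := eq_or_ne i (6 * r + 5)
  · refine ⟨3 * r + 1, by simp, ?_⟩
    simp only [coveringPattern, hq2, hq3, if_false, if_true]
    exact Int.modEq_iff_dvd.mpr ⟨-2, by push_cast; ring⟩
  obtain ⟨j, hj, rfl⟩ := exists_coveredPosition_eq hi (by omega) h3 hi3 hi5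
  have := hp ⟨j, by omega⟩
  refine ⟨p ⟨j, by omega⟩, by simp, ?_⟩
  rw [coveringPattern, if_neg (by omega), if_neg (by omega), if_neg (by omega),
    hinj.extend_apply]

theorem stmt19 (q : ℕ) (hq : q.Prime) (hq1 : q % 3 = 1)
    (k : ℕ) (hk : k = (2 * q - 2) / 3)
    (p : Fin k → ℕ) (hp : ∀ i, (p i).Prime) (hmono : StrictMono p)
    (hlb : ∀ i, 2 * q + 10 < p i) (n : ℕ) (hn : n = 6 * q * ∏ i, p i) :
    totalDomNum (unitaryCayley n) ≤ 2 * q + 6 ∧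
    2 * q + 6 ≤ jacobsthal n - 2 := by
  obtain ⟨r, rfl⟩ : ∃ r, q = 3 * r + 1 := ⟨q / 3, by omega⟩
  have hr : 2 ≤ r := by
    rcases r with _ | _ | r
    · exact absurd hq Nat.not_prime_one
    · exact absurd hq (by decide)
    · omega
  have hk2 : k = 2 * r := by omega
  have hn1 : 1 < n := hn ▸ one_lt_mul_of_lt_of_le (by omega) (prod_pos fun i _ ↦ (hp i).pos)
  have hprimes (ℓ : ℕ) := hn ▸ Nat.mem_primeFactors_six_mul_mul_prod_iff (ℓ := ℓ) hq hp
  constructor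
  · calc totalDomNum (unitaryCayley n) ≤ Nat.card (Fin 2 × Fin (3 * r + 4)) :=
          totalDomNum_unitaryCayley_le hn1 (dominatingPattern r) fun v ↦
            (exists_dominatingPattern_not_intModEq hr p hk2.le (fun j ↦ by linarith [hlb j]) v).imp
              fun w hw ℓ hℓ ↦ hw ℓ ((hprimes ℓ).mp hℓ)
      _ = 2 * (3 * r + 1) + 6 := by
        simp only [Nat.card_eq_fintype_card, Fintype.card_prod, Fintype.card_fin]
        ring
  · have := lt_jacobsthal_of_covering (m := 6 * r + 9) (by omega) (coveringPattern r p)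
      fun i hi ↦ (exists_intModEq_coveringPattern (by omega) hk2.ge hmono.injective
        (fun j ↦ by linarith [hlb j]) hi).imp fun ℓ hℓ ↦ ⟨(hprimes ℓ).mpr hℓ.1, hℓ.2⟩
    omega
end
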